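/- Let d ≠ 0 and ζ ∈ ℝ. For each s ∈ ℝ, setting ā₁(s) = s / √(1 + (s² - ζ)²), ā₂(s) = s(s² - ζ) / √(1 + (s² - ζ)²), and f̄(s) = s √(1 + (s² - ζ)²), the pair (ā₁(s), ā₂(s)) is a constant solution of the stationary Lugiato-Lefever system with forcing f = f̄(s). Conversely, every constant solution (a₁, a₂, f) ∈ ℝ³ of the system with detuning ζ arises in this way for some s ∈ ℝ. -/

import Mathlib

open Real

def IsConstantSolution (ζ a₁ a₂ f : ℝ) : Prop :=
  a₂ + ζ * a₁ - (a₁ ^ 2 + a₂ ^ 2) * a₁ = 0 ∧ a₁ - ζ * a₂ + (a₁ ^ 2 + a₂ ^ 2) * a₂ - f = 0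

theorem isConstantSolution_iff {ζ a₁ a₂ f : ℝ} :
    IsConstantSolution ζ a₁ a₂ f ↔
      a₂ = (a₁ ^ 2 + a₂ ^ 2 - ζ) * a₁ ∧ f = (1 + (a₁ ^ 2 + a₂ ^ 2 - ζ) ^ 2) * a₁ := by
  constructor
  · rintro ⟨h₁, h₂⟩
    have ha₂ : a₂ = (a₁ ^ 2 + a₂ ^ 2 - ζ) * a₁ := by linear_combination h₁
    exact ⟨ha₂, by linear_combination -h₂ + (a₁ ^ 2 + a₂ ^ 2 - ζ) * ha₂⟩
  · rintro ⟨ha₂, hf⟩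
    exact ⟨by linear_combination ha₂, by linear_combination (a₁ ^ 2 + a₂ ^ 2 - ζ) * ha₂ - hf⟩

theorem isConstantSolution_of_sq_eq {ζ s ρ : ℝ} (hρ : ρ ^ 2 = 1 + (s ^ 2 - ζ) ^ 2) :
    IsConstantSolution ζ (s / ρ) (s * (s ^ 2 - ζ) / ρ) (s * ρ) := by
  have hρ₀ : ρ ≠ 0 := by
    rintro rfl
    nlinarith [sq_nonneg (s ^ 2 - ζ)]
  have hnorm : (s / ρ) ^ 2 + (s * (s ^ 2 - ζ) / ρ) ^ 2 = s ^ 2 := by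
    field_simp
    linear_combination -s ^ 2 * hρ
  rw [isConstantSolution_iff, hnorm]
  constructor
  · ring
  · field_simp
    linear_combination s * hρ

theorem exists_eq_of_isConstantSolution {ζ a₁ a₂ f : ℝ} (h : IsConstantSolution ζ a₁ a₂ f) :
    ∃ s : ℝ,
      a₁ = s / √(1 + (s ^ 2 - ζ) ^ 2) ∧
      a₂ = s * (s ^ 2 - ζ) / √(1 + (s ^ 2 - ζ) ^ 2) ∧
      f = s * √(1 + (s ^ 2 - ζ) ^ 2) := by
  obtain ⟨ha₂, hf⟩ := isConstantSolution_iff.mp h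
  obtain ⟨ρ, hρdef⟩ : ∃ ρ, √(1 + (a₁ ^ 2 + a₂ ^ 2 - ζ) ^ 2) = ρ := ⟨_, rfl⟩
  have hρ : ρ ^ 2 = 1 + (a₁ ^ 2 + a₂ ^ 2 - ζ) ^ 2 := hρdef ▸ sq_sqrt (by positivity)
  have hρ₀ : ρ ≠ 0 := hρdef ▸ by positivity
  -- `s` has the sign of `a₁` and, by the first equation, modulus `√(a₁² + a₂²)`.
  have hs : (a₁ * ρ) ^ 2 = a₁ ^ 2 + a₂ ^ 2 := by
    linear_combination a₁ ^ 2 * hρ - (a₂ + (a₁ ^ 2 + a₂ ^ 2 - ζ) * a₁) * ha₂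
  refine ⟨a₁ * ρ, ?_, ?_, ?_⟩ <;> rw [hs, hρdef]
  · field_simp
  · field_simp
    linear_combination ha₂
  · linear_combination hf - a₁ * hρ

theorem stmt_8_general (ζ : ℝ) :
    (∀ s : ℝ,
      let a1 := s / Real.sqrt (1 + (s ^ 2 - ζ) ^ 2)
      let a2 := s * (s ^ 2 - ζ) / Real.sqrt (1 + (s ^ 2 - ζ) ^ 2)
      let f := s * Real.sqrt (1 + (s ^ 2 - ζ) ^ 2)
      a2 + ζ * a1 - (a1 ^ 2 + a2 ^ 2) * a1 = 0 ∧
      a1 - ζ * a2 + (a1 ^ 2 + a2 ^ 2) * a2 - f = 0) ∧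
    (∀ a1 a2 f : ℝ,
      a2 + ζ * a1 - (a1 ^ 2 + a2 ^ 2) * a1 = 0 →
      a1 - ζ * a2 + (a1 ^ 2 + a2 ^ 2) * a2 - f = 0 →
      ∃ s : ℝ,
        a1 = s / Real.sqrt (1 + (s ^ 2 - ζ) ^ 2) ∧
        a2 = s * (s ^ 2 - ζ) / Real.sqrt (1 + (s ^ 2 - ζ) ^ 2) ∧
        f = s * Real.sqrt (1 + (s ^ 2 - ζ) ^ 2)) :=
  ⟨fun _ => isConstantSolution_of_sq_eq (sq_sqrt (by positivity)),
    fun _ _ _ h₁ h₂ => exists_eq_of_isConstantSolution ⟨h₁, h₂⟩⟩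

theorem stmt_8 (d ζ : ℝ) (hd : d ≠ 0) :
    (∀ s : ℝ,
      let a1 := s / Real.sqrt (1 + (s ^ 2 - ζ) ^ 2)
      let a2 := s * (s ^ 2 - ζ) / Real.sqrt (1 + (s ^ 2 - ζ) ^ 2)
      let f := s * Real.sqrt (1 + (s ^ 2 - ζ) ^ 2)
      a2 + ζ * a1 - (a1 ^ 2 + a2 ^ 2) * a1 = 0 ∧
      a1 - ζ * a2 + (a1 ^ 2 + a2 ^ 2) * a2 - f = 0) ∧
    (∀ a1 a2 f : ℝ,
      a2 + ζ * a1 - (a1 ^ 2 + a2 ^ 2) * a1 = 0 →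
      a1 - ζ * a2 + (a1 ^ 2 + a2 ^ 2) * a2 - f = 0 →
      ∃ s : ℝ,
        a1 = s / Real.sqrt (1 + (s ^ 2 - ζ) ^ 2) ∧
        a2 = s * (s ^ 2 - ζ) / Real.sqrt (1 + (s ^ 2 - ζ) ^ 2) ∧
        f = s * Real.sqrt (1 + (s ^ 2 - ζ) ^ 2)) :=
  stmt_8_general ζ
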